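/- For every integer k ≥ 1 and every real x with 0 ≤ x ≤ 4/27, one has Σ_{γ ∈ Γ^(k)} x^{ℓ(γ)} / 𝔇(γ) ≤ 3/2. -/
import Mathlib


open MeasureTheory intervalIntegral Filter Topology

noncomputable section

/-- Lattice of Fourier modes `ℤ^{ν1} × ℤ^{ν2}`. -/
abbrev ZLat (ν1 ν2 : ℕ) := (Fin ν1 → ℤ) × (Fin ν2 → ℤ)

/-- ℓ¹-norm of a lattice vector. -/
def l1 {ν : ℕ} (m : Fin ν → ℤ) : ℝ := ∑ j, |(m j : ℝ)|

/-- Euclidean pairing of a lattice vector with a frequency vector. -/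
def zdot {ν : ℕ} (m : Fin ν → ℤ) (ω : Fin ν → ℝ) : ℝ := ∑ j, (m j : ℝ) * ω j

/-- The linear phase `Φ^t(m,n) = exp(−i(⟨m,ω⟩² + ⟨n,ω'⟩²)t)`. -/
def Phi {ν1 ν2 : ℕ} (ω : Fin ν1 → ℝ) (ω' : Fin ν2 → ℝ) (t : ℝ) (p : ZLat ν1 ν2) : ℂ :=
  Complex.exp (-Complex.I * (((zdot p.1 ω) ^ 2 + (zdot p.2 ω') ^ 2 : ℝ) : ℂ) * (t : ℂ))

/-- Triples of lattice points with prescribed alternating sum. -/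
def TripleFiber (ν1 ν2 : ℕ) (p : ZLat ν1 ν2) : Type :=
  {v : ZLat ν1 ν2 × ZLat ν1 ν2 × ZLat ν1 ν2 // v.1 - v.2.1 + v.2.2 = p}

/-- The Picard iteration for the Fourier coefficients of the 2D cubic NLS. -/
def picard {ν1 ν2 : ℕ} (ω : Fin ν1 → ℝ) (ω' : Fin ν2 → ℝ) (c : ZLat ν1 ν2 → ℂ) (ε : ℝ) :
    ℕ → ℝ → ZLat ν1 ν2 → ℂ
  | 0 => fun t p => Phi ω ω' t p * c p
  | (k + 1) => fun t p => Phi ω ω' t p * c p +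
      Complex.I * (ε : ℂ) * ∫ s in (0:ℝ)..t, Phi ω ω' (t - s) p *
        ∑' v : TripleFiber ν1 ν2 p,
          picard ω ω' c ε k s v.val.1 * (starRingEnd ℂ) (picard ω ω' c ε k s v.val.2.1) *
            picard ω ω' c ε k s v.val.2.2

/-- The time scale `T_ε`. -/
def Teps (ν1 ν2 : ℕ) (κ1 κ2 ε : ℝ) : ℝ := (4 / 27) * (κ1 / 6) ^ ν1 * (κ2 / 6) ^ ν2 * |ε|⁻¹

/-- The constant `𝒜`. -/
def Acal (ν1 ν2 : ℕ) (κ1 κ2 : ℝ) : ℝ := (3 / 2) * (6 / κ1) ^ ν1 * (6 / κ2) ^ ν2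

/-- Abstract branches of the combinatorial tree. -/
inductive Branch where
  | zero : Branch
  | one : Branch
  | node : Branch → Branch → Branch → Branch
deriving DecidableEq

/-- The counting function ℓ. -/
def ell : Branch → ℕ
  | .zero => 0
  | .one => 1
  | .node a b c => ell a + ell b + ell c + 1

/-- The denominator function 𝔇. -/
def frakD : Branch → ℕ
  | .zero => 1
  | .one => 1
  | .node a b c => (ell a + ell b + ell c + 1) * (frakD a * frakD b * frakD c)

/-- The finite branch sets `Γ^(k)`: `Γ^(1) = {0,1}`, `Γ^(k) = {0} ∪ (Γ^(k-1))³` for `k ≥ 2`. -/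
def GammaSet : ℕ → Finset Branch
  | 0 => ∅
  | 1 => {Branch.zero, Branch.one}
  | (k + 2) => insert Branch.zero
      (((GammaSet (k + 1)) ×ˢ (GammaSet (k + 1)) ×ˢ (GammaSet (k + 1))).image
        fun x => Branch.node x.1 x.2.1 x.2.2)

/-- The domain `D^{(k,γ)}` attached to a branch. -/
def Dom (ν1 ν2 : ℕ) : Branch → Type
  | .zero => ZLat ν1 ν2
  | .one => ZLat ν1 ν2 × ZLat ν1 ν2 × ZLat ν1 ν2
  | .node a b c => Dom ν1 ν2 a × Dom ν1 ν2 b × Dom ν1 ν2 c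

/-- Flattening of an element of `D^{(k,γ)}` to the tuple `((𝔪_j,𝔫_j))_{1≤j≤2σ(γ)}`. -/
def flatten {ν1 ν2 : ℕ} : (γ : Branch) → Dom ν1 ν2 γ → List (ZLat ν1 ν2)
  | .zero, p => [p]
  | .one, s => [s.1, s.2.1, s.2.2]
  | .node a b c, s => flatten a s.1 ++ flatten b s.2.1 ++ flatten c s.2.2

/-- Alternating sum of a list: `a₁ − a₂ + a₃ − ⋯`. -/
def altSum {ν1 ν2 : ℕ} : List (ZLat ν1 ν2) → ZLat ν1 ν2
  | [] => 0
  | (a :: l) => a - altSum l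

/-- The summation function `λ`. -/
def lam {ν1 ν2 : ℕ} (γ : Branch) (s : Dom ν1 ν2 γ) : ZLat ν1 ν2 := altSum (flatten γ s)

/-- The coefficient factor `ℭ^{(k,γ)}`. -/
def frakC {ν1 ν2 : ℕ} (c : ZLat ν1 ν2 → ℂ) : (γ : Branch) → Dom ν1 ν2 γ → ℂ
  | .zero, p => c p
  | .one, s => c s.1 * (starRingEnd ℂ) (c s.2.1) * c s.2.2
  | .node a b c', s =>
      frakC c a s.1 * (starRingEnd ℂ) (frakC c b s.2.1) * frakC c c' s.2.2

/-- The nested oscillatory integral factor `ℑ^{(k,γ)}`. -/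
def frakI {ν1 ν2 : ℕ} (ω : Fin ν1 → ℝ) (ω' : Fin ν2 → ℝ) :
    (γ : Branch) → ℝ → Dom ν1 ν2 γ → ℂ
  | .zero, t, p => Phi ω ω' t (lam .zero p)
  | .one, t, s => ∫ x in (0:ℝ)..t, Phi ω ω' (t - x) (lam .one s) *
      (Phi ω ω' x s.1 * (starRingEnd ℂ) (Phi ω ω' x s.2.1) * Phi ω ω' x s.2.2)
  | .node a b c, t, s => ∫ x in (0:ℝ)..t, Phi ω ω' (t - x) (lam (.node a b c) s) *
      (frakI ω ω' a x s.1 * (starRingEnd ℂ) (frakI ω ω' b x s.2.1) * frakI ω ω' c x s.2.2)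

/-- The prefactor `𝔉^{(k,γ)}`. -/
def frakF {ν1 ν2 : ℕ} (ε : ℝ) : (γ : Branch) → Dom ν1 ν2 γ → ℂ
  | .zero, _ => 1
  | .one, _ => Complex.I * (ε : ℂ)
  | .node a b c, s => Complex.I * (ε : ℂ) *
      (frakF ε a s.1 * (starRingEnd ℂ) (frakF ε b s.2.1) * frakF ε c s.2.2)

end

noncomputable section

lemma frakD_pos (γ : Branch) : 0 < frakD γ := by
  induction γ with
  | zero => simp [frakD]
  | one => simp [frakD]
  | node a b c ha hb hc =>
    exact Nat.mul_pos (by omega) (Nat.mul_pos (Nat.mul_pos ha hb) hc)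

lemma term_nonneg (x : ℝ) (hx0 : 0 ≤ x) (γ : Branch) :
    0 ≤ x ^ ell γ / (frakD γ : ℝ) := by
  have := frakD_pos γ
  positivity

/-- The branch sum `Σ_{γ ∈ Γ^(k)} x^{ℓ(γ)}/𝔇(γ)` is at most `3/2` for `0 ≤ x ≤ 4/27`. -/
theorem branch_sum_bound (k : ℕ) (hk : 1 ≤ k) (x : ℝ) (hx0 : 0 ≤ x) (hx : x ≤ 4 / 27) :
    ∑ γ ∈ GammaSet k, x ^ ell γ / (frakD γ : ℝ) ≤ 3 / 2 := by
  obtain ⟨n, rfl⟩ : ∃ n, k = n + 1 := ⟨k - 1, by omega⟩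
  clear hk
  induction n with
  | zero =>
    show ∑ γ ∈ ({Branch.zero, Branch.one} : Finset Branch), x ^ ell γ / (frakD γ : ℝ) ≤ 3 / 2
    rw [Finset.sum_pair (by simp : Branch.zero ≠ Branch.one)]
    simp only [ell, frakD, Nat.cast_one, pow_zero, pow_one, div_one]
    linarith
  | succ n ih =>
    set G := GammaSet (n + 1) with hG
    set S := ∑ γ ∈ G, x ^ ell γ / (frakD γ : ℝ) with hS
    have hSnn : 0 ≤ S := Finset.sum_nonneg fun γ _ => term_nonneg x hx0 γ
    show ∑ γ ∈ insert Branch.zero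
        ((G ×ˢ G ×ˢ G).image fun p => Branch.node p.1 p.2.1 p.2.2),
        x ^ ell γ / (frakD γ : ℝ) ≤ 3 / 2
    have hnotmem : Branch.zero ∉
        (G ×ˢ G ×ˢ G).image fun p => Branch.node p.1 p.2.1 p.2.2 := by simp
    rw [Finset.sum_insert hnotmem,
      Finset.sum_image (f := fun γ => x ^ ell γ / (frakD γ : ℝ))
        (fun p _ q _ h => by
          obtain ⟨a, b, c⟩ := p; obtain ⟨a', b', c'⟩ := q
          simpa [Prod.ext_iff] using h)]
    simp only [ell, frakD, pow_zero, frakD, Nat.cast_one, div_one]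
    have key : ∑ p ∈ G ×ˢ G ×ˢ G,
        x ^ (ell p.1 + ell p.2.1 + ell p.2.2 + 1) /
          (((ell p.1 + ell p.2.1 + ell p.2.2 + 1) *
            (frakD p.1 * frakD p.2.1 * frakD p.2.2) : ℕ) : ℝ)
        ≤ x * (S * S * S) := by
      have step1 : ∀ p ∈ G ×ˢ G ×ˢ G,
          x ^ (ell p.1 + ell p.2.1 + ell p.2.2 + 1) /
            (((ell p.1 + ell p.2.1 + ell p.2.2 + 1) *
              (frakD p.1 * frakD p.2.1 * frakD p.2.2) : ℕ) : ℝ)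
          ≤ x * ((x ^ ell p.1 / (frakD p.1 : ℝ)) *
              (x ^ ell p.2.1 / (frakD p.2.1 : ℝ)) *
              (x ^ ell p.2.2 / (frakD p.2.2 : ℝ))) := by
        rintro ⟨a, b, c⟩ -
        have ha := frakD_pos a
        have hb := frakD_pos b
        have hc := frakD_pos c
        have hD : (0 : ℝ) < (frakD a : ℝ) * (frakD b : ℝ) * (frakD c : ℝ) := by
          positivity
        have hrhs : x * ((x ^ ell a / (frakD a : ℝ)) * (x ^ ell b / (frakD b : ℝ)) *
            (x ^ ell c / (frakD c : ℝ)))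
            = x ^ (ell a + ell b + ell c + 1) /
              ((frakD a : ℝ) * (frakD b : ℝ) * (frakD c : ℝ)) := by
          field_simp
          ring
        rw [hrhs]
        push_cast
        apply div_le_div_of_nonneg_left (by positivity) hD
        nlinarith [hD, (by exact_mod_cast Nat.one_le_iff_ne_zero.mpr (by omega) :
          (1 : ℝ) ≤ ((ell a + ell b + ell c + 1 : ℕ) : ℝ))]
      calc _ ≤ ∑ p ∈ G ×ˢ G ×ˢ G,
            x * ((x ^ ell p.1 / (frakD p.1 : ℝ)) *
              (x ^ ell p.2.1 / (frakD p.2.1 : ℝ)) *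
              (x ^ ell p.2.2 / (frakD p.2.2 : ℝ))) := Finset.sum_le_sum step1
        _ = x * (S * S * S) := by
            rw [hS, Finset.sum_product]
            simp only [Finset.sum_product]
            simp only [Finset.mul_sum, Finset.sum_mul]
            refine Finset.sum_congr rfl fun a _ => Finset.sum_congr rfl fun b _ =>
              Finset.sum_congr rfl fun c _ => by ring
    have hS32 : S ≤ 3 / 2 := ih
    have : x * (S * S * S) ≤ (4 / 27) * ((3/2) * (3/2) * (3/2)) := by
      have h1 : S * S * S ≤ (3/2) * (3/2) * (3/2) := by nlinarith
      nlinarith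
    linarith [key]

end
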